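/- For every integer n ≥ 2 and every integer k with 2 ≤ k ≤ F_{n−1}, one has Z(F_n + k) − Z(F_n + k − 1) = Z(k) − Z(k − 1), where F_m denotes the m-th Fibonacci number. -/

import Mathlib

/-- A natural number is *fibbinary* if its binary representation
contains no two consecutive ones. -/
def IsFibbinary (m : ℕ) : Prop :=
  ∀ i : ℕ, ¬(m.testBit i = true ∧ m.testBit (i + 1) = true)

/-- `fibbin n` is the `n`-th fibbinary number, i.e. the `n`-th positive integer
(1-indexed, in increasing order) whose binary representation has no two
consecutive ones. -/
noncomputable def fibbin (n : ℕ) : ℕ :=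
  Nat.nth (fun m => 0 < m ∧ IsFibbinary m) (n - 1)

/-- `odfib n` is the `n`-th odd fibbinary number
(1-indexed, in increasing order). -/
noncomputable def odfib (n : ℕ) : ℕ :=
  Nat.nth (fun m => Odd m ∧ IsFibbinary m) (n - 1)

/-- `Z n` is the index `j` such that the `j`-th fibbinary number equals the
`n`-th odd fibbinary number, i.e. `Z n = fibbin⁻¹ (odfib n)`. -/
noncomputable def Z (n : ℕ) : ℕ :=
  sInf {j : ℕ | 1 ≤ j ∧ fibbin j = odfib n}

/-! Let `q₀ = 0 < q₁ < ⋯` enumerate the fibbinary numbers (`Nat.nth IsFibbinary`). The odd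
fibbinary numbers are exactly the `4q + 1` with `q` fibbinary, so `odfib n = 4 q_{n-1} + 1`, and
`Z n` is the number of fibbinary numbers below `odfib n`. There are `F_{m+2}` fibbinary numbers
below `2^m`, and those in `[2^{m+1}, 2^{m+1} + 2^m)` are the `2^{m+1} + q` with `q < 2^m`
fibbinary, while none lies in `[2^{m+1} + 2^m, 2^{m+2})`. Hence shifting the index by `F_{m+4}`
adds `2^{m+4}` to `odfib` and `F_{m+6}` to `Z`: `Z (F_{m+4} + i) = F_{m+6} + Z i` for
`1 ≤ i ≤ F_{m+3}`, and the differences in the theorem cancel. -/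

open Nat

theorem isFibbinary_zero : IsFibbinary 0 := by simp [IsFibbinary]

theorem isFibbinary_two_pow (k : ℕ) : IsFibbinary (2 ^ k) := by
  intro i
  simp only [testBit_two_pow, decide_eq_true_eq]
  omega

theorem isFibbinary_one : IsFibbinary 1 := isFibbinary_two_pow 0

theorem isFibbinary_two_pow_mul_add {m a q : ℕ} (hq : q < 2 ^ m) :
    IsFibbinary (2 ^ (m + 1) * a + q) ↔ IsFibbinary a ∧ IsFibbinary q := by
  have hbit := testBit_two_pow_mul_add a (hq.trans (Nat.pow_lt_pow_succ one_lt_two))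
  have hhigh : ∀ j, m ≤ j → q.testBit j = false := fun j hj =>
    testBit_lt_two_pow (hq.trans_le (Nat.pow_le_pow_right two_pos hj))
  unfold IsFibbinary
  simp only [hbit]
  constructor
  · intro h
    refine ⟨fun i hi => h (i + (m + 1)) ?_, fun i hi => h i ?_⟩
    · rwa [if_neg (by omega), if_neg (by omega), show i + (m + 1) + 1 - (m + 1) = i + 1 by omega,
        Nat.add_sub_cancel]
    · have : i + 1 < m + 1 := by
        by_contra hc
        simp [hhigh (i + 1) (by omega)] at hi
      rwa [if_pos (by omega), if_pos this]
  · rintro ⟨ha, hq'⟩ i hi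
    rcases lt_trichotomy i m with hlt | rfl | hgt
    · rw [if_pos (by omega), if_pos (by omega)] at hi
      exact hq' i hi
    · rw [if_pos (by omega), hhigh i le_rfl] at hi
      simp at hi
    · rw [if_neg (by omega), if_neg (by omega), show i + 1 - (m + 1) = i - (m + 1) + 1 by omega]
        at hi
      exact ha _ hi

theorem isFibbinary_four_mul_add_one {q : ℕ} : IsFibbinary (4 * q + 1) ↔ IsFibbinary q := by
  simpa [isFibbinary_one] using isFibbinary_two_pow_mul_add (m := 1) (a := q) one_lt_two

theorem odd_isFibbinary_iff {x : ℕ} :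
    Odd x ∧ IsFibbinary x ↔ ∃ q, IsFibbinary q ∧ x = 4 * q + 1 := by
  constructor
  · rintro ⟨hodd, hx⟩
    have hx4 : x = 4 * (x / 4) + 1 := by
      have := hx 0
      simp only [testBit_zero, testBit_succ, zero_add, decide_eq_true_eq] at this
      have := Nat.odd_iff.mp hodd
      omega
    rw [hx4, isFibbinary_four_mul_add_one] at hx
    exact ⟨x / 4, hx, hx4⟩
  · rintro ⟨q, hq, rfl⟩
    exact ⟨⟨2 * q, by ring⟩, isFibbinary_four_mul_add_one.mpr hq⟩

theorem not_isFibbinary_two_pow_mul_three_add {m s : ℕ} (hs : s < 2 ^ m) :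
    ¬IsFibbinary (2 ^ m * 3 + s) := by
  have hbit := testBit_two_pow_mul_add 3 hs
  refine fun h => h m ⟨?_, ?_⟩
  · rw [hbit, if_neg (lt_irrefl m), Nat.sub_self]
    rfl
  · rw [hbit, if_neg (by omega), Nat.add_sub_cancel_left]
    rfl

theorem infinite_setOf_isFibbinary : (Set.ofPred IsFibbinary).Infinite :=
  Set.infinite_of_injective_forall_mem (Nat.pow_right_injective le_rfl) isFibbinary_two_pow

noncomputable instance : DecidablePred IsFibbinary := Classical.decPred _

theorem count_two_pow_succ_add {m t : ℕ} (ht : t ≤ 2 ^ m) :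
    count IsFibbinary (2 ^ (m + 1) + t) =
      count IsFibbinary (2 ^ (m + 1)) + count IsFibbinary t := by
  rw [count_add]
  congr 1
  rw [count_eq_card_filter_range, count_eq_card_filter_range]
  congr 1
  refine Finset.filter_congr fun k hk => ?_
  simpa [isFibbinary_one] using
    isFibbinary_two_pow_mul_add (a := 1) ((Finset.mem_range.mp hk).trans_le ht)

theorem count_two_pow_mul_three_add {m s : ℕ} (hs : s ≤ 2 ^ m) :
    count IsFibbinary (2 ^ m * 3 + s) = count IsFibbinary (2 ^ m * 3) := by
  rw [count_add, add_eq_left, count_iff_forall_not]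
  exact fun k hk => not_isFibbinary_two_pow_mul_three_add (hk.trans_le hs)

theorem count_two_pow : ∀ m, count IsFibbinary (2 ^ m) = fib (m + 2)
  | 0 => by simp [count_one, isFibbinary_zero]
  | 1 => by simp [count_succ, isFibbinary_zero, isFibbinary_one, fib_add_two]
  | m + 2 => by
    calc count IsFibbinary (2 ^ (m + 2))
        = count IsFibbinary (2 ^ m * 3 + 2 ^ m) := by
          rw [show 2 ^ (m + 2) = 2 ^ m * 3 + 2 ^ m by ring]
      _ = count IsFibbinary (2 ^ (m + 1) + 2 ^ m) := by
        rw [count_two_pow_mul_three_add le_rfl, show 2 ^ m * 3 = 2 ^ (m + 1) + 2 ^ m by ring]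
      _ = fib (m + 2 + 2) := by
        rw [count_two_pow_succ_add le_rfl, count_two_pow (m + 1), count_two_pow m]
        simp only [fib_add_two]
        ring

theorem nth_isFibbinary_fib_add {m i : ℕ} (hi : i < fib (m + 2)) :
    nth IsFibbinary (fib (m + 3) + i) = 2 ^ (m + 1) + nth IsFibbinary i := by
  have hlt : nth IsFibbinary i < 2 ^ m := nth_lt_of_lt_count (by rwa [count_two_pow])
  have hmem : IsFibbinary (2 ^ (m + 1) + nth IsFibbinary i) := by
    simpa [isFibbinary_one, nth_mem_of_infinite infinite_setOf_isFibbinary] using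
      (isFibbinary_two_pow_mul_add (a := 1) hlt).mpr
  rw [← nth_count hmem, count_two_pow_succ_add hlt.le, count_two_pow,
    count_nth_of_infinite infinite_setOf_isFibbinary]

theorem nth_odd_isFibbinary (n : ℕ) :
    nth (fun x => Odd x ∧ IsFibbinary x) n = 4 * nth IsFibbinary n + 1 := by
  have hcomp : (fun i => Odd (4 * i + 1) ∧ IsFibbinary (4 * i + 1)) = IsFibbinary := by
    ext i
    exact ⟨fun h => isFibbinary_four_mul_add_one.mp h.2,
      fun h => odd_isFibbinary_iff.mpr ⟨i, h, rfl⟩⟩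
  have hinf : (Set.ofPred fun x => Odd x ∧ IsFibbinary x).Infinite :=
    Set.infinite_of_injOn_mapsTo (f := fun q => 4 * q + 1)
      (fun a _ b _ h => by dsimp only at h; omega)
      (fun q hq => odd_isFibbinary_iff.mpr ⟨q, hq, rfl⟩) infinite_setOf_isFibbinary
  rw [← nth_comp_of_strictMono (f := fun i => 4 * i + 1) (fun a b h => by dsimp only; omega)
    (fun k hk => by obtain ⟨q, -, rfl⟩ := odd_isFibbinary_iff.mp hk; exact ⟨q, rfl⟩)
    (fun hf => absurd hf hinf), hcomp]

theorem nth_pos_isFibbinary (i : ℕ) :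
    nth (fun x => 0 < x ∧ IsFibbinary x) i = nth IsFibbinary (i + 1) := by
  have hmem := nth_mem_of_infinite infinite_setOf_isFibbinary (i + 1)
  have hpos : 0 < nth IsFibbinary (i + 1) := by
    simpa [nth_zero_of_zero isFibbinary_zero] using
      (nth_lt_nth infinite_setOf_isFibbinary).mpr (succ_pos i)
  have hcount : count (fun x => 0 < x ∧ IsFibbinary x) (nth IsFibbinary (i + 1)) = i := by
    obtain ⟨y, hy⟩ : ∃ y, nth IsFibbinary (i + 1) = y + 1 :=
      ⟨_, (succ_pred_eq_of_pos hpos).symm⟩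
    have h1 := count_succ' (p := fun x => 0 < x ∧ IsFibbinary x) y
    have h2 := count_succ' (p := IsFibbinary) y
    have h3 := count_nth_of_infinite infinite_setOf_isFibbinary (i + 1)
    simp only [isFibbinary_zero, lt_irrefl, false_and, if_true, if_false, zero_lt_succ,
      true_and] at h1 h2
    rw [hy] at h3 ⊢
    omega
  conv_lhs => rw [← hcount]
  exact nth_count ⟨hpos, hmem⟩

theorem odfib_eq_nth (n : ℕ) : odfib n = 4 * nth IsFibbinary (n - 1) + 1 :=
  nth_odd_isFibbinary (n - 1)

theorem fibbin_eq_nth {j : ℕ} (hj : 1 ≤ j) : fibbin j = nth IsFibbinary j := by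
  rw [fibbin, nth_pos_isFibbinary, Nat.sub_add_cancel hj]

theorem Z_eq_count (n : ℕ) : Z n = count IsFibbinary (odfib n) := by
  have hmem : IsFibbinary (odfib n) := by
    rw [odfib_eq_nth, isFibbinary_four_mul_add_one]
    exact nth_mem_of_infinite infinite_setOf_isFibbinary _
  have hpos : 1 ≤ count IsFibbinary (odfib n) :=
    count_strict_mono isFibbinary_zero (by rw [odfib_eq_nth]; omega)
  suffices {j | 1 ≤ j ∧ fibbin j = odfib n} = {count IsFibbinary (odfib n)} by
    rw [Z, this, csInf_singleton]
  ext j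
  constructor
  · rintro ⟨hj, h⟩
    rw [fibbin_eq_nth hj] at h
    rw [Set.mem_singleton_iff, ← h, count_nth_of_infinite infinite_setOf_isFibbinary]
  · rintro rfl
    exact ⟨hpos, by rw [fibbin_eq_nth hpos, nth_count hmem]⟩

theorem Z_fib_add {m i : ℕ} (hi : 1 ≤ i) (hi' : i ≤ fib (m + 3)) :
    Z (fib (m + 4) + i) = fib (m + 6) + Z i := by
  have hlt : nth IsFibbinary (i - 1) < 2 ^ (m + 1) :=
    nth_lt_of_lt_count (by rw [count_two_pow]; exact show i - 1 < fib (m + 3) by omega)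
  have hshift : nth IsFibbinary (fib (m + 4) + (i - 1)) = 2 ^ (m + 2) + nth IsFibbinary (i - 1) :=
    nth_isFibbinary_fib_add (m := m + 1) (show i - 1 < fib (m + 3) by omega)
  have hodfib : odfib (fib (m + 4) + i) = 2 ^ (m + 4) + odfib i := by
    rw [odfib_eq_nth, odfib_eq_nth, Nat.add_sub_assoc hi, hshift]
    ring
  have hle : odfib i ≤ 2 ^ (m + 3) := by
    rw [odfib_eq_nth, pow_succ, pow_succ]
    omega
  rw [Z_eq_count, Z_eq_count, hodfib, count_two_pow_succ_add hle, count_two_pow]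

theorem Z_fib_add_sub_general (n k : ℕ) (hk1 : 2 ≤ k)
    (hk2 : k ≤ Nat.fib (n - 1)) :
    (Z (Nat.fib n + k) : ℤ) - (Z (Nat.fib n + k - 1) : ℤ)
      = (Z k : ℤ) - (Z (k - 1) : ℤ) := by
  obtain ⟨m, rfl⟩ : ∃ m, n = m + 4 := by
    have h3 : 3 ≤ n - 1 := by
      by_contra h
      have := fib_mono (show n - 1 ≤ 2 by omega)
      rw [fib_two] at this
      omega
    exact ⟨n - 4, by omega⟩
  rw [show m + 4 - 1 = m + 3 from rfl] at hk2
  rw [show fib (m + 4) + k - 1 = fib (m + 4) + (k - 1) by omega, Z_fib_add (by omega) hk2,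
    Z_fib_add (by omega) (by omega)]
  push_cast
  ring

/-- For `n ≥ 2` and `2 ≤ k ≤ F_{n−1}`,
`Z (F_n + k) − Z (F_n + k − 1) = Z k − Z (k − 1)`. -/
theorem Z_fib_add_sub (n k : ℕ) (hn : 2 ≤ n) (hk1 : 2 ≤ k)
    (hk2 : k ≤ Nat.fib (n - 1)) :
    (Z (Nat.fib n + k) : ℤ) - (Z (Nat.fib n + k - 1) : ℤ)
      = (Z k : ℤ) - (Z (k - 1) : ℤ) :=
  Z_fib_add_sub_general n k hk1 hk2
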